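/- arXiv:2604.22951 — 8 statements merged into one kernel-verified Lean document; each statement's English description precedes it below -/
import Mathlib

section
/- Assume k is even with k ≥ 2 and p_j > 0 for all j. If w ∈ ℝ^d satisfies B(w)^{k−1} w_j = A(w)^{k−1} w*_j for all j ∈ {1,…,d} (i.e., the population gradient of L vanishes at w), then w = 0 or w = w* or w = −w*. -/
/-- The weighted alignment `A(w) = ∑_j p_j w_j w*_j`. -/
noncomputable def alignA (d : ℕ) (p wstar w : Fin d → ℝ) : ℝ :=
  ∑ j, p j * w j * wstar j

/-- The weighted norm `B(w) = ∑_j p_j w_j²`. -/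
noncomputable def normB (d : ℕ) (p w : Fin d → ℝ) : ℝ :=
  ∑ j, p j * (w j) ^ 2

/-!
If `B(w) = 0` then `w = 0` since all weights are positive. Otherwise the stationarity equations
say that `w = c • w*` with `c = A(w)^(k-1) / B(w)^(k-1)`; as `B(w*) = 1`, this gives `A(w) = c` and
`B(w) = c²`, so `c · c^(2m) = c^m` with `m = k - 1`; hence `c^(m+1) = 1` and `c = ±1`.
-/

lemma eq_one_or_eq_neg_one_of_mul_sq_pow_eq_pow {R : Type*} [CommRing R] [LinearOrder R]
    [IsStrictOrderedRing R] {c : R} (hc : c ≠ 0) (m : ℕ) (h : c * (c ^ 2) ^ m = c ^ m) :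
    c = 1 ∨ c = -1 := by
  have hpow : c ^ (m + 1) = 1 := by
    refine mul_right_cancel₀ (pow_ne_zero m hc) ?_
    linear_combination h
  rcases (pow_eq_one_iff_of_ne_zero m.succ_ne_zero).mp hpow with h1 | ⟨h1, -⟩
  · exact .inl h1
  · exact .inr h1

section

variable {d : ℕ} {p : Fin d → ℝ}

lemma eq_zero_of_normB_eq_zero (hp : ∀ j, 0 < p j) {w : Fin d → ℝ} (h : normB d p w = 0) :
    w = 0 := by
  have hterm := (Finset.sum_eq_zero_iff_of_nonneg fun j _ =>
    mul_nonneg (hp j).le (sq_nonneg (w j))).mp h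
  funext j
  simpa [(hp j).ne'] using hterm j (Finset.mem_univ j)

lemma normB_smul (c : ℝ) (v : Fin d → ℝ) : normB d p (c • v) = c ^ 2 * normB d p v := by
  simp only [normB, Pi.smul_apply, smul_eq_mul, Finset.mul_sum]
  exact Finset.sum_congr rfl fun j _ => by ring

lemma alignA_smul_self (c : ℝ) (v : Fin d → ℝ) :
    alignA d p v (c • v) = c * normB d p v := by
  simp only [alignA, normB, Pi.smul_apply, smul_eq_mul, Finset.mul_sum]
  exact Finset.sum_congr rfl fun j _ => by ring

lemma normB_eq_one_of_sign (hp1 : ∑ j, p j = 1) {s : Fin d → ℝ}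
    (hs : ∀ j, s j = 1 ∨ s j = -1) : normB d p s = 1 := by
  rw [← hp1, normB]
  refine Finset.sum_congr rfl fun j _ => ?_
  rcases hs j with h | h <;> simp [h]

end

theorem stationary_points_general (d k : ℕ)
    (p : Fin d → ℝ) (hp : ∀ j, 0 < p j) (hp1 : ∑ j, p j = 1)
    (wstar : Fin d → ℝ) (hws : ∀ j, wstar j = 1 ∨ wstar j = -1)
    (w : Fin d → ℝ)
    (hcrit : ∀ j, (normB d p w) ^ (k - 1) * w j = (alignA d p wstar w) ^ (k - 1) * wstar j) :
    w = 0 ∨ w = wstar ∨ w = -wstar := by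
  by_cases hB0 : normB d p w = 0
  · exact .inl (eq_zero_of_normB_eq_zero hp hB0)
  obtain ⟨c, hc_def, hw⟩ : ∃ c, c = alignA d p wstar w ^ (k - 1) / normB d p w ^ (k - 1) ∧
      w = c • wstar := by
    refine ⟨_, rfl, funext fun j => ?_⟩
    rw [Pi.smul_apply, smul_eq_mul, div_mul_eq_mul_div, eq_div_iff (pow_ne_zero _ hB0)]
    linear_combination hcrit j
  have hstar := normB_eq_one_of_sign hp1 hws
  have hA : alignA d p wstar w = c := by rw [hw, alignA_smul_self, hstar, mul_one]
  have hB : normB d p w = c ^ 2 := by rw [hw, normB_smul, hstar, mul_one]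
  have hc : c ≠ 0 := by rintro rfl; exact hB0 (by simp [hB])
  rw [hA, hB, eq_div_iff (pow_ne_zero _ (pow_ne_zero 2 hc))] at hc_def
  rcases eq_one_or_eq_neg_one_of_mul_sq_pow_eq_pow hc _ hc_def with rfl | rfl
  · exact .inr (.inl (by simpa using hw))
  · exact .inr (.inr (by simpa using hw))

/-- For the population loss of the k-multiplicative composition task with `k` even, `k ≥ 2`,
and `p_j > 0` for all `j`: the only stationary points (where
`B(w)^{k−1} w_j = A(w)^{k−1} w*_j` for all `j`) are `w = 0`, `w = w*` and `w = −w*`. -/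
theorem stationary_points (d k : ℕ) (hd : 0 < d) (hk : 2 ≤ k) (hkeven : Even k)
    (p : Fin d → ℝ) (hp : ∀ j, 0 < p j) (hp1 : ∑ j, p j = 1)
    (wstar : Fin d → ℝ) (hws : ∀ j, wstar j = 1 ∨ wstar j = -1)
    (w : Fin d → ℝ)
    (hcrit : ∀ j, (normB d p w) ^ (k - 1) * w j = (alignA d p wstar w) ^ (k - 1) * wstar j) :
    w = 0 ∨ w = wstar ∨ w = -wstar :=
  stationary_points_general d k p hp hp1 wstar hws w hcrit
end

section
/- Assume k is even with k ≥ 2 and p_j > 0 for all j, and let p_min = min_{j} p_j. Then for every w ∈ ℝ^d, Σ_{j=1}^d ( k·p_j·(B(w)^{k−1} w_j − A(w)^{k−1} w*_j) )² ≥ 2·k·p_min·A(w)^{2k−2}·L(w); that is, the squared Euclidean norm of the population gradient satisfies the Polyak–Łojasiewicz-type inequality ‖∇L(w)‖₂² ≥ 2 k p_min A(w)^{2k−2} L(w). -/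
/-- The population loss `L(w) = (1/2)(B(w)^k − 2 A(w)^k + 1)`. -/
noncomputable def popLoss (d k : ℕ) (p wstar w : Fin d → ℝ) : ℝ :=
  (1 / 2) * ((normB d p w) ^ k - 2 * (alignA d p wstar w) ^ k + 1)

/-!
Write `k = n + 1`. Since `p_j ≥ p_min`, `‖∇L‖² ≥ k² p_min ∑ p_j (B^n w_j − A^n w*_j)²`, and since
`∑ p_j = 1` and `w*_j² = 1` this weighted sum is `B^{2n+1} − 2 A^{n+1} B^n + A^{2n}`. The claim thus
reduces to the polynomial inequality
`A^{2n} (B^{n+1} − 2 A^{n+1} + 1) ≤ (n + 1) (B^{2n+1} − 2 A^{n+1} B^n + A^{2n})`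
under the Cauchy–Schwarz constraint `A² ≤ B`. Multiplied by `B^{n+1}`, the difference of its sides is
`((n+1) B^n − A^{2n}) (B^{n+1} − A^{n+1})² + A^{2n} (n B^n (B − A²) − A² (B^n − A^{2n}))`,
and both terms are nonnegative when `A² ≤ B`, the second by `a (b^n − a^n) ≤ n b^n (b − a)`
for `0 ≤ a ≤ b`.
-/

lemma mul_pow_sub_pow_le {R : Type*} [CommRing R] [LinearOrder R] [IsStrictOrderedRing R]
    {a b : R} (ha : 0 ≤ a) (hab : a ≤ b) (n : ℕ) :
    a * (b ^ n - a ^ n) ≤ n * b ^ n * (b - a) := by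
  induction n with
  | zero => simp
  | succ n ih =>
    have hb : 0 ≤ b := ha.trans hab
    have hpow : a * a ^ n ≤ b * b ^ n :=
      mul_le_mul hab (pow_le_pow_left₀ ha hab n) (pow_nonneg ha n) hb
    have hba : 0 ≤ b - a := sub_nonneg.2 hab
    calc a * (b ^ (n + 1) - a ^ (n + 1)) = b * (a * (b ^ n - a ^ n)) + a * a ^ n * (b - a) := by
          ring
      _ ≤ b * (n * b ^ n * (b - a)) + b * b ^ n * (b - a) := by gcongr
      _ = (n + 1 : ℕ) * b ^ (n + 1) * (b - a) := by push_cast; ring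

lemma loss_poly_le_grad_poly {R : Type*} [CommRing R] [LinearOrder R] [IsStrictOrderedRing R]
    (n : ℕ) {A B : R} (hAB : A ^ 2 ≤ B) :
    A ^ (2 * n) * (B ^ (n + 1) - 2 * A ^ (n + 1) + 1)
      ≤ (n + 1) * (B ^ (2 * n + 1) - 2 * A ^ (n + 1) * B ^ n + A ^ (2 * n)) := by
  have hA2 : 0 ≤ A ^ 2 := sq_nonneg A
  rcases (hA2.trans hAB).eq_or_lt with hB | hB
  · obtain rfl : A = 0 := pow_eq_zero_iff two_ne_zero |>.1 (le_antisymm (hB ▸ hAB) hA2)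
    subst hB
    simp only [ne_eq, Nat.add_eq_zero_iff, one_ne_zero, and_false, not_false_eq_true, zero_pow,
      mul_zero, zero_add, mul_one, zero_mul, sub_self]
    exact le_mul_of_one_le_left (pow_nonneg le_rfl _) (by simp)
  · have hpow : A ^ (2 * n) ≤ B ^ n := by
      rw [pow_mul]; exact pow_le_pow_left₀ hA2 hAB n
    have hfirst : 0 ≤ ((n + 1) * B ^ n - A ^ (2 * n)) * (B ^ (n + 1) - A ^ (n + 1)) ^ 2 := by
      refine mul_nonneg ?_ (sq_nonneg _)
      nlinarith [pow_nonneg hB.le n, (n.cast_nonneg : (0 : R) ≤ n)]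
    have hsecond : 0 ≤ A ^ (2 * n) * (n * B ^ n * (B - A ^ 2) - A ^ 2 * (B ^ n - A ^ (2 * n))) := by
      refine mul_nonneg ((even_two_mul n).pow_nonneg A) (sub_nonneg.2 ?_)
      simpa only [pow_mul] using mul_pow_sub_pow_le hA2 hAB n
    have key : B ^ (n + 1) * ((n + 1) * (B ^ (2 * n + 1) - 2 * A ^ (n + 1) * B ^ n + A ^ (2 * n)))
        - B ^ (n + 1) * (A ^ (2 * n) * (B ^ (n + 1) - 2 * A ^ (n + 1) + 1))
        = ((n + 1) * B ^ n - A ^ (2 * n)) * (B ^ (n + 1) - A ^ (n + 1)) ^ 2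
          + A ^ (2 * n) * (n * B ^ n * (B - A ^ 2) - A ^ 2 * (B ^ n - A ^ (2 * n))) := by
      ring
    refine le_of_mul_le_mul_left ?_ (pow_pos hB (n + 1))
    linarith

section Weighted

variable {d : ℕ} {p wstar : Fin d → ℝ}

lemma alignA_sq_le_normB (hp : ∀ j, 0 ≤ p j) (hp1 : ∑ j, p j = 1)
    (hws : ∀ j, wstar j ^ 2 = 1) (w : Fin d → ℝ) :
    alignA d p wstar w ^ 2 ≤ normB d p w := by
  have h := Finset.sum_sq_le_sum_mul_sum_of_sq_le_mul Finset.univ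
    (r := fun j ↦ p j * w j * wstar j) (f := fun j ↦ p j * w j ^ 2)
    (fun j _ ↦ mul_nonneg (hp j) (sq_nonneg _)) (fun j _ ↦ hp j)
    (fun j _ ↦ le_of_eq <| by linear_combination (p j * w j) ^ 2 * hws j)
  rwa [hp1, mul_one] at h

lemma sum_mul_sub_sq_eq (hp1 : ∑ j, p j = 1) (hws : ∀ j, wstar j ^ 2 = 1)
    (w : Fin d → ℝ) (X Y : ℝ) :
    ∑ j, p j * (X * w j - Y * wstar j) ^ 2
      = X ^ 2 * normB d p w - 2 * X * Y * alignA d p wstar w + Y ^ 2 := by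
  have hterm : ∀ j, p j * (X * w j - Y * wstar j) ^ 2
      = X ^ 2 * (p j * w j ^ 2) - 2 * X * Y * (p j * w j * wstar j) + Y ^ 2 * p j := fun j ↦ by
    linear_combination Y ^ 2 * p j * hws j
  simp only [hterm, Finset.sum_add_distrib, Finset.sum_sub_distrib, ← Finset.mul_sum, hp1,
    normB, alignA, mul_one]

end Weighted

lemma mul_sum_mul_sq_le_sum_sq {ι : Type*} (s : Finset ι) {c : ℝ} {p : ι → ℝ} (hc : 0 ≤ c)
    (hcp : ∀ j ∈ s, c ≤ p j) (v : ι → ℝ) :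
    c * ∑ j ∈ s, p j * v j ^ 2 ≤ ∑ j ∈ s, (p j * v j) ^ 2 := by
  rw [Finset.mul_sum]
  refine Finset.sum_le_sum fun j hj ↦ ?_
  calc c * (p j * v j ^ 2) ≤ p j * (p j * v j ^ 2) := by
        gcongr
        · exact mul_nonneg (hc.trans (hcp j hj)) (sq_nonneg _)
        · exact hcp j hj
    _ = (p j * v j) ^ 2 := by ring

theorem pl_inequality_general (d k : ℕ)
    (p : Fin d → ℝ) (hp : ∀ j, 0 < p j) (hp1 : ∑ j, p j = 1)
    (pmin : ℝ) (hpmin : IsLeast (Set.range p) pmin)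
    (wstar : Fin d → ℝ) (hws : ∀ j, wstar j = 1 ∨ wstar j = -1)
    (w : Fin d → ℝ) :
    2 * k * pmin * (alignA d p wstar w) ^ (2 * k - 2) * popLoss d k p wstar w
      ≤ ∑ j, ((k : ℝ) * p j * ((normB d p w) ^ (k - 1) * w j
          - (alignA d p wstar w) ^ (k - 1) * wstar j)) ^ 2 := by
  obtain ⟨⟨j₀, rfl⟩, hmin⟩ := hpmin
  cases k with
  | zero => simp
  | succ n =>
    have hws2 : ∀ j, wstar j ^ 2 = 1 := fun j ↦ by rcases hws j with h | h <;> simp [h]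
    rw [Nat.add_sub_cancel, show 2 * (n + 1) - 2 = 2 * n by omega]
    set A := alignA d p wstar w
    set B := normB d p w
    have hAB : A ^ 2 ≤ B := alignA_sq_le_normB (fun j ↦ (hp j).le) hp1 hws2 w
    calc 2 * ((n + 1 : ℕ) : ℝ) * p j₀ * A ^ (2 * n) * popLoss d (n + 1) p wstar w
        = (n + 1) * p j₀ * (A ^ (2 * n) * (B ^ (n + 1) - 2 * A ^ (n + 1) + 1)) := by
          unfold popLoss; push_cast; ring
      _ ≤ (n + 1) * p j₀ * ((n + 1) * (B ^ (2 * n + 1) - 2 * A ^ (n + 1) * B ^ n + A ^ (2 * n))) :=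
          mul_le_mul_of_nonneg_left (loss_poly_le_grad_poly n hAB) (by have := hp j₀; positivity)
      _ = p j₀ * ∑ j, p j * ((n + 1) * B ^ n * w j - (n + 1) * A ^ n * wstar j) ^ 2 := by
          rw [sum_mul_sub_sq_eq hp1 hws2]; ring
      _ ≤ ∑ j, (p j * ((n + 1) * B ^ n * w j - (n + 1) * A ^ n * wstar j)) ^ 2 :=
          mul_sum_mul_sq_le_sum_sq _ (hp j₀).le (fun j _ ↦ hmin ⟨j, rfl⟩) _
      _ = _ := by push_cast; exact Finset.sum_congr rfl fun j _ ↦ by ring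

/-- Polyak–Łojasiewicz inequality: for `k` even with `k ≥ 2` and `p_j > 0` for all `j`,
the squared norm of the population gradient of the k-multiplicative composition loss
satisfies `‖∇L(w)‖₂² ≥ 2 k p_min A(w)^{2k−2} L(w)`. -/
theorem pl_inequality (d k : ℕ) (hd : 0 < d) (hk : 2 ≤ k) (hkeven : Even k)
    (p : Fin d → ℝ) (hp : ∀ j, 0 < p j) (hp1 : ∑ j, p j = 1)
    (pmin : ℝ) (hpmin : IsLeast (Set.range p) pmin)
    (wstar : Fin d → ℝ) (hws : ∀ j, wstar j = 1 ∨ wstar j = -1)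
    (w : Fin d → ℝ) :
    2 * k * pmin * (alignA d p wstar w) ^ (2 * k - 2) * popLoss d k p wstar w
      ≤ ∑ j, ((k : ℝ) * p j * ((normB d p w) ^ (k - 1) * w j
          - (alignA d p wstar w) ^ (k - 1) * wstar j)) ^ 2 :=
  pl_inequality_general d k p hp hp1 pmin hpmin wstar hws w
end

section
/- For every real number a, every real number b ≥ 1, and every integer k ≥ 2, it holds that k·a²·b^{2k−1} − 2k·a·b^{k−1} + k ≥ a²·b^k − 2a + 1; equivalently, (k·b^{k−1} − 1)·(b^k·a² − 2a) + k − 1 ≥ 0. -/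
lemma pl_core_aux (b : ℝ) (hb : 1 ≤ b) : ∀ m : ℕ,
    ((m : ℝ) + 2) * b ^ (m + 1) ≤ ((m : ℝ) + 1) * b ^ (m + 2) + 1 := by
  intro m
  induction m with
  | zero => simpa using by nlinarith [sq_nonneg (b - 1)]
  | succ n ih =>
      have hb0 : (0 : ℝ) ≤ b := le_trans zero_le_one hb
      have hp : (1 : ℝ) ≤ b ^ (n + 2) := one_le_pow₀ hb
      have h2 := mul_le_mul_of_nonneg_left ih hb0
      have e3 : b ^ (n + 2) = b ^ (n + 1) * b := pow_succ b (n + 1)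
      have e4 : b ^ (n + 3) = b ^ (n + 2) * b := pow_succ b (n + 2)
      push_cast
      show ((n : ℝ) + 1 + 2) * b ^ (n + 2) ≤ ((n : ℝ) + 1 + 1) * b ^ (n + 3) + 1
      nlinarith [mul_nonneg (sub_nonneg.2 hb) (sub_nonneg.2 hp)]

/-- The elementary inequality at the core of the PL condition: for every real `a`,
every `b ≥ 1` and every integer `k ≥ 2`,
`k a² b^{2k−1} − 2 k a b^{k−1} + k ≥ a² b^k − 2a + 1`; equivalently
`(k b^{k−1} − 1)(b^k a² − 2a) + k − 1 ≥ 0`. -/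
theorem pl_core_inequality (a b : ℝ) (hb : 1 ≤ b) (k : ℕ) (hk : 2 ≤ k) :
    a ^ 2 * b ^ k - 2 * a + 1
      ≤ (k : ℝ) * a ^ 2 * b ^ (2 * k - 1) - 2 * k * a * b ^ (k - 1) + k ∧
    0 ≤ ((k : ℝ) * b ^ (k - 1) - 1) * (b ^ k * a ^ 2 - 2 * a) + k - 1 := by
  obtain ⟨m, rfl⟩ : ∃ m, k = m + 2 := ⟨k - 2, by omega⟩
  have e1 : m + 2 - 1 = m + 1 := by omega
  have e2 : 2 * (m + 2) - 1 = 2 * m + 3 := by omega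
  rw [e1, e2]
  have hb0 : (0 : ℝ) ≤ b := le_trans zero_le_one hb
  have hp1 : (1 : ℝ) ≤ b ^ (m + 1) := one_le_pow₀ hb
  have hp2 : (1 : ℝ) ≤ b ^ (m + 2) := one_le_pow₀ hb
  have haux := pl_core_aux b hb m
  have hsq : (0 : ℝ) ≤ (b ^ (m + 2) * a - 1) ^ 2 := sq_nonneg _
  have key : 0 ≤ ((↑(m + 2) : ℝ) * b ^ (m + 1) - 1) * (b ^ (m + 2) * a ^ 2 - 2 * a)
      + ↑(m + 2) - 1 := by
    set x := b ^ (m + 2) * a ^ 2 - 2 * a with hx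
    have hbx : -1 ≤ b ^ (m + 2) * x := by nlinarith
    rcases le_or_gt 0 x with h | h
    · have hc : (1 : ℝ) ≤ ((m : ℝ) + 2) * b ^ (m + 1) := by nlinarith
      push_cast
      nlinarith
    · push_cast
      nlinarith [mul_le_mul_of_nonpos_right haux h.le,
        mul_le_mul_of_nonneg_left hbx (by positivity : (0:ℝ) ≤ (m : ℝ) + 1)]
  refine ⟨?_, key⟩
  have hpow : b ^ (2 * m + 3) = b ^ (m + 1) * b ^ (m + 2) := by ring
  rw [hpow]
  push_cast at key ⊢
  linarith [key]
end

section
/- Assume k ≥ 1. For every w ∈ ℝ^d, 2·L(w) ≥ (A(w)^k − 1)²; that is, B(w)^k − 2A(w)^k + 1 ≥ (A(w)^k − 1)². -/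
/-- For `k ≥ 1`, the population loss satisfies `2 L(w) ≥ (A(w)^k − 1)²`, i.e.
`B(w)^k − 2 A(w)^k + 1 ≥ (A(w)^k − 1)²`. -/
theorem loss_lower_bound_alignment (d k : ℕ) (hd : 0 < d) (hk : 1 ≤ k)
    (p : Fin d → ℝ) (hp : ∀ j, 0 ≤ p j) (hp1 : ∑ j, p j = 1)
    (wstar : Fin d → ℝ) (hws : ∀ j, wstar j = 1 ∨ wstar j = -1)
    (w : Fin d → ℝ) :
    ((alignA d p wstar w) ^ k - 1) ^ 2 ≤ 2 * popLoss d k p wstar w ∧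
    ((alignA d p wstar w) ^ k - 1) ^ 2
      ≤ (normB d p w) ^ k - 2 * (alignA d p wstar w) ^ k + 1 := by
  set A := alignA d p wstar w with hA
  set B := normB d p w with hB
  have hAB : A ^ 2 ≤ B := by
    have key := Finset.sum_mul_sq_le_sq_mul_sq Finset.univ
      (fun j => Real.sqrt (p j)) (fun j => Real.sqrt (p j) * (w j * wstar j))
    have h1 : ∀ j, Real.sqrt (p j) * (Real.sqrt (p j) * (w j * wstar j))
        = p j * w j * wstar j := by
      intro j
      rw [← mul_assoc, Real.mul_self_sqrt (hp j)]; ring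
    have h2 : ∀ j : Fin d, Real.sqrt (p j) ^ 2 = p j := fun j => Real.sq_sqrt (hp j)
    have h3 : ∀ j : Fin d, (Real.sqrt (p j) * (w j * wstar j)) ^ 2 = p j * w j ^ 2 := by
      intro j
      rcases hws j with h | h <;>
        simp [mul_pow, h2, h, mul_pow]
    simp only [h1] at key
    calc A ^ 2 = (∑ j, p j * w j * wstar j) ^ 2 := by rw [hA, alignA]
      _ ≤ (∑ j, Real.sqrt (p j) ^ 2) * ∑ j, (Real.sqrt (p j) * (w j * wstar j)) ^ 2 := key
      _ = B := by
          simp only [h2, h3, hp1, one_mul, hB, normB]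
  have hBnn : 0 ≤ B := le_trans (sq_nonneg A) hAB
  have hpow : (A ^ k) ^ 2 ≤ B ^ k := by
    calc (A ^ k) ^ 2 = (A ^ 2) ^ k := by ring
      _ ≤ B ^ k := pow_le_pow_left₀ (sq_nonneg A) hAB k
  have main : (A ^ k - 1) ^ 2 ≤ B ^ k - 2 * A ^ k + 1 := by nlinarith [hpow]
  refine ⟨?_, main⟩
  rw [popLoss]
  linarith [main]
end

section
/- Assume k is even with k ≥ 2, p_j > 0 for all j, and let p_min = min_j p_j. Let w ∈ ℝ^d satisfy A(w) > 0 and L(w) ≤ ε₁ for some ε₁ ≥ 0. Then ‖w − w*‖_∞² ≤ (2·ε₁/p_min)·(1 + 1/(k·A(w)^{2k−2})), where ‖·‖_∞ is the coordinatewise maximum norm. -/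
lemma pow_sub_pow_ge' (k : ℕ) (x y : ℝ) (hy : 0 ≤ y) (hxy : y ≤ x) :
    (k : ℝ) * y ^ (k - 1) * (x - y) ≤ x ^ k - y ^ k := by
  rw [← geom_sum₂_mul]
  apply mul_le_mul_of_nonneg_right _ (by linarith)
  calc (k : ℝ) * y ^ (k-1) = ∑ _i ∈ Finset.range k, y ^ (k-1) := by
        rw [Finset.sum_const, Finset.card_range, nsmul_eq_mul]
    _ ≤ ∑ i ∈ Finset.range k, x ^ i * y ^ (k-1-i) := by
        apply Finset.sum_le_sum
        intro i hi
        have hik : i < k := Finset.mem_range.mp hi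
        calc y ^ (k-1) = y ^ i * y ^ (k-1-i) := by
              rw [← pow_add]; congr 1; omega
          _ ≤ x ^ i * y ^ (k-1-i) :=
              mul_le_mul_of_nonneg_right (pow_le_pow_left₀ hy hxy i) (pow_nonneg hy _)

/-- Recovery lemma: for `k` even with `k ≥ 2` and `p_j > 0`, if `A(w) > 0` and
`L(w) ≤ ε₁`, then `‖w − w*‖_∞² ≤ (2 ε₁ / p_min) (1 + 1/(k A(w)^{2k−2}))`.
(The norm on `Fin d → ℝ` is the sup norm.) -/
theorem recovery_from_small_loss (d k : ℕ) (hd : 0 < d) (hk : 2 ≤ k) (hkeven : Even k)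
    (p : Fin d → ℝ) (hp : ∀ j, 0 < p j) (hp1 : ∑ j, p j = 1)
    (pmin : ℝ) (hpmin : IsLeast (Set.range p) pmin)
    (wstar : Fin d → ℝ) (hws : ∀ j, wstar j = 1 ∨ wstar j = -1)
    (w : Fin d → ℝ) (hA : 0 < alignA d p wstar w)
    (ε₁ : ℝ) (hε₁ : 0 ≤ ε₁) (hL : popLoss d k p wstar w ≤ ε₁) :
    ‖w - wstar‖ ^ 2
      ≤ (2 * ε₁ / pmin) * (1 + 1 / (k * (alignA d p wstar w) ^ (2 * k - 2))) := by
  set A := alignA d p wstar w with hAdef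
  set B := normB d p w with hBdef
  have hws2 : ∀ j, wstar j ^ 2 = 1 := fun j => by rcases hws j with h | h <;> simp [h]
  -- expansion of B - A^2
  have hBA2 : B - A ^ 2 = ∑ j, p j * (w j * wstar j - A) ^ 2 := by
    have h1 : ∀ j : Fin d, p j * (w j * wstar j - A) ^ 2
        = p j * (w j) ^ 2 - 2 * A * (p j * w j * wstar j) + A ^ 2 * p j := fun j => by
      linear_combination (p j * (w j) ^ 2) * hws2 j
    rw [Finset.sum_congr rfl (fun j _ => h1 j)]
    rw [Finset.sum_add_distrib, Finset.sum_sub_distrib, ← Finset.mul_sum, ← Finset.mul_sum]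
    rw [hp1, hBdef, hAdef, normB, alignA]
    ring
  have hBge : A ^ 2 ≤ B := by
    have : 0 ≤ ∑ j, p j * (w j * wstar j - A) ^ 2 :=
      Finset.sum_nonneg fun j _ => mul_nonneg (hp j).le (sq_nonneg _)
    linarith [hBA2]
  -- loss bound
  have hL2 : B ^ k - 2 * A ^ k + 1 ≤ 2 * ε₁ := by
    have := hL
    rw [popLoss] at this
    rw [← hAdef, ← hBdef] at this
    linarith
  have hBk : (A ^ k) ^ 2 ≤ B ^ k := by
    calc (A ^ k) ^ 2 = (A ^ 2) ^ k := by ring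
      _ ≤ B ^ k := pow_le_pow_left₀ (sq_nonneg A) hBge k
  have hAk1 : (A ^ k - 1) ^ 2 ≤ 2 * ε₁ := by nlinarith
  have hBAk : B ^ k - (A ^ 2) ^ k ≤ 2 * ε₁ := by
    have hid : (A ^ 2) ^ k = (A ^ k) ^ 2 := by ring
    rw [hid]
    nlinarith [sq_nonneg (A ^ k - 1)]
  -- (A-1)^2 ≤ (A^k-1)^2
  have hfac : (∑ i ∈ Finset.range k, A ^ i) * (A - 1) = A ^ k - 1 := geom_sum_mul A k
  have hsum1 : 1 ≤ ∑ i ∈ Finset.range k, A ^ i := by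
    have h0 : A ^ 0 ≤ ∑ i ∈ Finset.range k, A ^ i :=
      Finset.single_le_sum (fun i _ => pow_nonneg hA.le i) (Finset.mem_range.mpr (by omega))
    simpa using h0
  have hA1 : (A - 1) ^ 2 ≤ 2 * ε₁ := by
    have hsq : (A - 1) ^ 2 ≤ (A ^ k - 1) ^ 2 := by
      rw [← hfac]
      have h1 : (A - 1) ^ 2 * 1 ≤ (A - 1) ^ 2 * (∑ i ∈ Finset.range k, A ^ i) ^ 2 := by
        apply mul_le_mul_of_nonneg_left _ (sq_nonneg _)
        nlinarith
      calc (A - 1) ^ 2 = (A - 1) ^ 2 * 1 := by ring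
        _ ≤ (A - 1) ^ 2 * (∑ i ∈ Finset.range k, A ^ i) ^ 2 := h1
        _ = ((∑ i ∈ Finset.range k, A ^ i) * (A - 1)) ^ 2 := by ring
    linarith
  -- B - A^2 bound
  have hDpos : 0 < (k : ℝ) * A ^ (2 * k - 2) := by
    apply mul_pos _ (pow_pos hA _)
    exact_mod_cast (by omega : 0 < k)
  have hkey := pow_sub_pow_ge' k B (A ^ 2) (sq_nonneg A) hBge
  have hpowid : (A ^ 2) ^ (k - 1) = A ^ (2 * k - 2) := by
    rw [← pow_mul]; congr 1; omega
  have hBA_le : B - A ^ 2 ≤ 2 * ε₁ / ((k : ℝ) * A ^ (2 * k - 2)) := by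
    rw [le_div_iff₀ hDpos, mul_comm]
    rw [hpowid] at hkey
    linarith
  -- weighted sum identity
  have hSumEq : ∑ j, p j * (w j - wstar j) ^ 2 = (B - A ^ 2) + (A - 1) ^ 2 := by
    have h1 : ∀ j : Fin d, p j * (w j - wstar j) ^ 2
        = p j * (w j) ^ 2 - 2 * (p j * w j * wstar j) + p j := fun j => by
      linear_combination (p j) * hws2 j
    have e1 : ∑ j, p j * (w j) ^ 2 = B := rfl
    have e2 : ∑ j, p j * w j * wstar j = A := rfl
    rw [Finset.sum_congr rfl (fun j _ => h1 j)]
    rw [Finset.sum_add_distrib, Finset.sum_sub_distrib, ← Finset.mul_sum, hp1, e1, e2]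
    ring
  have hSum : ∑ j, p j * (w j - wstar j) ^ 2
      ≤ 2 * ε₁ + 2 * ε₁ / ((k : ℝ) * A ^ (2 * k - 2)) := by
    rw [hSumEq]; linarith
  -- pmin facts
  obtain ⟨⟨j0, hj0⟩, hlb⟩ := hpmin
  have hpminpos : 0 < pmin := hj0 ▸ hp j0
  have hpmin_le : ∀ i, pmin ≤ p i := fun i => hlb ⟨i, rfl⟩
  set R := (2 * ε₁ / pmin) * (1 + 1 / ((k : ℝ) * A ^ (2 * k - 2))) with hRdef
  have hReq : R = (2 * ε₁ + 2 * ε₁ / ((k : ℝ) * A ^ (2 * k - 2))) / pmin := by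
    rw [hRdef]; field_simp
  have hR0 : 0 ≤ R := by
    rw [hReq]
    apply div_nonneg _ hpminpos.le
    have : 0 ≤ 2 * ε₁ / ((k : ℝ) * A ^ (2 * k - 2)) := div_nonneg (by linarith) hDpos.le
    linarith
  have hcoord : ∀ i, (w i - wstar i) ^ 2 ≤ R := by
    intro i
    have h1 : p i * (w i - wstar i) ^ 2 ≤ ∑ j, p j * (w j - wstar j) ^ 2 :=
      Finset.single_le_sum (f := fun j => p j * (w j - wstar j) ^ 2)
        (fun j _ => mul_nonneg (hp j).le (sq_nonneg _)) (Finset.mem_univ i)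
    have h2 : pmin * (w i - wstar i) ^ 2 ≤ p i * (w i - wstar i) ^ 2 :=
      mul_le_mul_of_nonneg_right (hpmin_le i) (sq_nonneg _)
    rw [hReq, le_div_iff₀ hpminpos, mul_comm]
    linarith
  have hnorm : ‖w - wstar‖ ≤ Real.sqrt R := by
    apply (pi_norm_le_iff_of_nonneg (Real.sqrt_nonneg _)).mpr
    intro i
    rw [Pi.sub_apply, Real.norm_eq_abs, ← Real.sqrt_sq_eq_abs]
    exact Real.sqrt_le_sqrt (hcoord i)
  calc ‖w - wstar‖ ^ 2 ≤ (Real.sqrt R) ^ 2 :=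
        pow_le_pow_left₀ (norm_nonneg _) hnorm 2
    _ = R := Real.sq_sqrt hR0
end

section
/- Let R ≥ 1, let w ∈ ℝ^d satisfy ‖w‖_∞ ≤ R, let w* ∈ {−1,1}^d, and let x₁, …, x_k be one-hot vectors in ℝ^d. With g = (∏_{t=1}^k ⟨w, x_t⟩ − ∏_{t=1}^k ⟨w*, x_t⟩) · Σ_{t=1}^k (∏_{s≠t} ⟨w, x_s⟩) x_t, it holds that ‖g‖₂² ≤ k²·R^{2k−2}·(∏_{t=1}^k ⟨w, x_t⟩ − ∏_{t=1}^k ⟨w*, x_t⟩)². Consequently, when x₁,…,x_k are i.i.d. one-hot inputs with P[x_t = e_j] = p_j for a probability vector p, E‖g‖₂² ≤ 2·k²·R^{2k−2}·L(w), where L(w) = (1/2)·E[(∏_t ⟨w,x_t⟩ − ∏_t ⟨w*,x_t⟩)²]. -/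
open MeasureTheory ProbabilityTheory Finset

/-! For one-hot inputs every factor `⟨w, xₜ⟩` is a coordinate of `w`, so each coefficient
`∏_{s ≠ t} ⟨w, xₛ⟩` of the gradient direction is at most `R^{k-1}` in absolute value. The
direction `∑ₜ cₜ xₜ` is a combination of probability vectors, so its `ℓ¹` norm, and hence its
`ℓ²` norm, is at most `∑ₜ |cₜ| ≤ k R^{k-1}`. The expectation bound integrates this pointwise
bound, the inputs being almost surely one-hot because the probabilities `pⱼ` sum to one. -/

theorem Finset.abs_prod_le_pow_card {ι : Type*} (s : Finset ι) {R : ℝ} (a : ι → ℝ)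
    (ha : ∀ t ∈ s, |a t| ≤ R) : |∏ t ∈ s, a t| ≤ R ^ #s := by
  rw [abs_prod, ← prod_const]
  exact prod_le_prod (fun _ _ => abs_nonneg _) ha

theorem Finset.sum_sq_le_sq_sum_abs {ι : Type*} (s : Finset ι) (v : ι → ℝ) :
    ∑ j ∈ s, v j ^ 2 ≤ (∑ j ∈ s, |v j|) ^ 2 := by
  simpa only [sq_abs] using sum_sq_le_sq_sum_of_nonneg fun j _ => abs_nonneg (v j)

section Stochastic

variable {ι κ : Type*} [Fintype ι] [Fintype κ]

theorem sum_abs_sum_mul_le_sum_abs (c : ι → ℝ) (x : ι → κ → ℝ) (hx0 : ∀ t j, 0 ≤ x t j)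
    (hx1 : ∀ t, ∑ j, x t j = 1) : ∑ j, |∑ t, c t * x t j| ≤ ∑ t, |c t| :=
  calc ∑ j, |∑ t, c t * x t j| ≤ ∑ j, ∑ t, |c t| * x t j := by
        gcongr with j
        refine (abs_sum_le_sum_abs _ _).trans_eq (sum_congr rfl fun t _ => ?_)
        rw [abs_mul, abs_of_nonneg (hx0 t j)]
    _ = ∑ t, |c t| := by
        rw [sum_comm]
        simp only [← mul_sum, hx1, mul_one]

theorem sum_sq_mul_sum_prod_erase_mul_le [DecidableEq ι] {R : ℝ} (a : ι → ℝ)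
    (ha : ∀ t, |a t| ≤ R) (x : ι → κ → ℝ) (hx0 : ∀ t j, 0 ≤ x t j) (hx1 : ∀ t, ∑ j, x t j = 1)
    (b : ℝ) :
    ∑ j, (b * ∑ t, (∏ s ∈ univ.erase t, a s) * x t j) ^ 2
      ≤ (Fintype.card ι : ℝ) ^ 2 * R ^ (2 * Fintype.card ι - 2) * b ^ 2 := by
  set n := Fintype.card ι
  have hc : ∀ t, |∏ s ∈ univ.erase t, a s| ≤ R ^ (n - 1) := fun t => by
    simpa [card_erase_of_mem] using abs_prod_le_pow_card (univ.erase t) a fun s _ => ha s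
  have hv : ∑ j, |∑ t, (∏ s ∈ univ.erase t, a s) * x t j| ≤ n * R ^ (n - 1) :=
    calc _ ≤ ∑ t, |∏ s ∈ univ.erase t, a s| := sum_abs_sum_mul_le_sum_abs _ x hx0 hx1
      _ ≤ ∑ _t : ι, R ^ (n - 1) := sum_le_sum fun t _ => hc t
      _ = n * R ^ (n - 1) := by rw [sum_const, card_univ, nsmul_eq_mul]
  calc ∑ j, (b * ∑ t, (∏ s ∈ univ.erase t, a s) * x t j) ^ 2
      = b ^ 2 * ∑ j, (∑ t, (∏ s ∈ univ.erase t, a s) * x t j) ^ 2 := by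
        simp only [mul_pow, ← mul_sum]
    _ ≤ b ^ 2 * (n * R ^ (n - 1)) ^ 2 := by
        gcongr
        exact (sum_sq_le_sq_sum_abs _ _).trans
          (pow_le_pow_left₀ (sum_nonneg fun _ _ => abs_nonneg _) hv 2)
    _ = n ^ 2 * R ^ (2 * n - 2) * b ^ 2 := by
        rw [mul_pow, ← pow_mul, show (n - 1) * 2 = 2 * n - 2 by omega]
        ring

end Stochastic

section OneHot

variable {ι κ : Type*} [DecidableEq κ]

theorem pi_single_one_left_injective : Function.Injective fun j : κ => (Pi.single j 1 : κ → ℝ) :=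
  fun i j h => by simpa [Pi.single_apply] using congrFun h i

variable [Fintype ι] [Fintype κ]

theorem abs_sum_mul_le_of_eq_single {R : ℝ} (u : κ → ℝ) (hu : ∀ j, |u j| ≤ R) {x : κ → ℝ}
    (hx : ∃ j, x = Pi.single j 1) : |∑ m, u m * x m| ≤ R := by
  obtain ⟨j, rfl⟩ := hx
  simpa [Pi.single_apply] using hu j

theorem abs_prod_sum_mul_le_norm_pow (u : κ → ℝ) {x : ι → κ → ℝ}
    (hx : ∀ t, ∃ j, x t = Pi.single j 1) : |∏ t, ∑ m, u m * x t m| ≤ ‖u‖ ^ Fintype.card ι :=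
  abs_prod_le_pow_card univ _ fun t _ =>
    abs_sum_mul_le_of_eq_single u (fun j => (Real.norm_eq_abs _).symm.trans_le
      (norm_le_pi_norm u j)) (hx t)

theorem sum_sq_mul_sum_prod_erase_inner_le_of_eq_single [DecidableEq ι] {R : ℝ} (u : κ → ℝ)
    (hu : ∀ j, |u j| ≤ R) (x : ι → κ → ℝ) (hx : ∀ t, ∃ j, x t = Pi.single j 1) (b : ℝ) :
    ∑ j, (b * ∑ t, (∏ s ∈ univ.erase t, ∑ m, u m * x s m) * x t j) ^ 2
      ≤ (Fintype.card ι : ℝ) ^ 2 * R ^ (2 * Fintype.card ι - 2) * b ^ 2 := by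
  have hx0 : ∀ t j, 0 ≤ x t j := fun t j => by
    obtain ⟨i, hi⟩ := hx t
    simp [hi, Pi.single_apply, apply_ite]
  have hx1 : ∀ t, ∑ j, x t j = 1 := fun t => by
    obtain ⟨i, hi⟩ := hx t
    simp [hi]
  exact sum_sq_mul_sum_prod_erase_mul_le _ (fun t => abs_sum_mul_le_of_eq_single u hu (hx t))
    x hx0 hx1 b

theorem integrable_sq_sub_prod_sum_mul {Ω : Type*} [MeasurableSpace Ω] {μ : Measure Ω}
    [IsFiniteMeasure μ] (u v : κ → ℝ) {x : ι → Ω → κ → ℝ} (hxm : ∀ t, Measurable (x t))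
    (hx : ∀ᵐ ω ∂μ, ∀ t, ∃ j, x t ω = Pi.single j 1) :
    Integrable (fun ω => ((∏ t, ∑ m, u m * x t ω m) - ∏ t, ∑ m, v m * x t ω m) ^ 2) μ := by
  refine Integrable.of_bound (by fun_prop) ((‖u‖ ^ Fintype.card ι + ‖v‖ ^ Fintype.card ι) ^ 2) ?_
  filter_upwards [hx] with ω hω
  rw [norm_pow, Real.norm_eq_abs]
  exact pow_le_pow_left₀ (abs_nonneg _) ((abs_sub _ _).trans (add_le_add
    (abs_prod_sum_mul_le_norm_pow u hω) (abs_prod_sum_mul_le_norm_pow v hω))) 2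

end OneHot

theorem ae_exists_eq_of_sum_measure_preimage_eq_one {Ω α ι : Type*} [MeasurableSpace Ω]
    [MeasurableSpace α] [MeasurableSingletonClass α] [Fintype ι] {μ : Measure Ω}
    [IsProbabilityMeasure μ] {X : Ω → α} (hX : Measurable X) {e : ι → α}
    (he : Function.Injective e) (h : ∑ i, μ (X ⁻¹' {e i}) = 1) :
    ∀ᵐ ω ∂μ, ∃ i, X ω = e i := by
  let s := univ.map ⟨e, he⟩
  have hs : μ (X ⁻¹' s) = μ Set.univ := by
    rw [← sum_measure_preimage_singleton s fun a _ => hX (measurableSet_singleton a), sum_map,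
      measure_univ]
    exact h
  filter_upwards [(ae_mem_iff_measure_eq (hX s.measurableSet).nullMeasurableSet).2 hs] with ω hω
  simpa [s, eq_comm] using hω

theorem stochastic_gradient_second_moment_general (d k : ℕ)
    (R : ℝ)
    (w wstar : Fin d → ℝ) (hw : ∀ j, |w j| ≤ R) :
    (∀ x : Fin k → Fin d → ℝ, (∀ t, ∃ j, x t = Pi.single j 1) →
      (∑ j, (((∏ t, ∑ m, w m * x t m) - (∏ t, ∑ m, wstar m * x t m)) *
          ∑ t, (∏ s ∈ Finset.univ.erase t, ∑ m, w m * x s m) * x t j) ^ 2)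
        ≤ (k : ℝ) ^ 2 * R ^ (2 * k - 2) *
            ((∏ t, ∑ m, w m * x t m) - (∏ t, ∑ m, wstar m * x t m)) ^ 2) ∧
    (∀ (p : Fin d → ℝ), (∀ j, 0 ≤ p j) → (∑ j, p j = 1) →
      ∀ (Ω : Type) (_ : MeasurableSpace Ω) (μ : Measure Ω), IsProbabilityMeasure μ →
      ∀ (x : Fin k → Ω → (Fin d → ℝ)), (∀ t, Measurable (x t)) →
        iIndepFun x μ →
        (∀ t j, μ {ω | x t ω = Pi.single j 1} = ENNReal.ofReal (p j)) →
        (∫ ω, ∑ j, (((∏ t, ∑ m, w m * x t ω m) - (∏ t, ∑ m, wstar m * x t ω m)) *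
            ∑ t, (∏ s ∈ Finset.univ.erase t, ∑ m, w m * x s ω m) * x t ω j) ^ 2 ∂μ)
          ≤ 2 * (k : ℝ) ^ 2 * R ^ (2 * k - 2) *
            ((1 / 2) *
              ∫ ω, ((∏ t, ∑ m, w m * x t ω m) - (∏ t, ∑ m, wstar m * x t ω m)) ^ 2 ∂μ)) := by
  have pointwise := fun x hx => by
    simpa using sum_sq_mul_sum_prod_erase_inner_le_of_eq_single w hw (ι := Fin k) x hx
      ((∏ t, ∑ m, w m * x t m) - ∏ t, ∑ m, wstar m * x t m)
  refine ⟨pointwise, fun p hp hpsum Ω _ μ _ x hxm _ hxp => ?_⟩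
  have hae : ∀ᵐ ω ∂μ, ∀ t, ∃ j, x t ω = Pi.single j 1 := ae_all_iff.2 fun t =>
    ae_exists_eq_of_sum_measure_preimage_eq_one (hxm t) pi_single_one_left_injective <| by
      simp only [Set.preimage, Set.mem_singleton_iff, hxp t]
      rw [← ENNReal.ofReal_sum_of_nonneg fun j _ => hp j, hpsum, ENNReal.ofReal_one]
  calc _ ≤ ∫ ω, (k : ℝ) ^ 2 * R ^ (2 * k - 2) *
          ((∏ t, ∑ m, w m * x t ω m) - (∏ t, ∑ m, wstar m * x t ω m)) ^ 2 ∂μ :=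
        integral_mono_of_nonneg (ae_of_all _ fun ω => sum_nonneg fun j _ => sq_nonneg _)
          ((integrable_sq_sub_prod_sum_mul w wstar hxm hae).const_mul _)
          (hae.mono fun ω => pointwise _)
    _ = _ := by rw [integral_const_mul]; ring

/-- Second-moment bound for the stochastic gradient: if `‖w‖_∞ ≤ R` with `R ≥ 1` and
`w* ∈ {−1,1}^d`, then for any one-hot inputs `x₁,…,x_k` the per-sample gradient `g`
satisfies `‖g‖₂² ≤ k² R^{2k−2} (∏ₜ⟨w,xₜ⟩ − ∏ₜ⟨w*,xₜ⟩)²`; consequently, when the inputs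
are i.i.d. one-hot with `P[xₜ = e_j] = p_j`, `E‖g‖₂² ≤ 2 k² R^{2k−2} L(w)` where
`L(w) = (1/2) E[(∏ₜ⟨w,xₜ⟩ − ∏ₜ⟨w*,xₜ⟩)²]`. -/
theorem stochastic_gradient_second_moment (d k : ℕ) (hd : 0 < d) (hk : 0 < k)
    (R : ℝ) (hR : 1 ≤ R)
    (w wstar : Fin d → ℝ) (hw : ∀ j, |w j| ≤ R) (hws : ∀ j, wstar j = 1 ∨ wstar j = -1) :
    (∀ x : Fin k → Fin d → ℝ, (∀ t, ∃ j, x t = Pi.single j 1) →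
      (∑ j, (((∏ t, ∑ m, w m * x t m) - (∏ t, ∑ m, wstar m * x t m)) *
          ∑ t, (∏ s ∈ Finset.univ.erase t, ∑ m, w m * x s m) * x t j) ^ 2)
        ≤ (k : ℝ) ^ 2 * R ^ (2 * k - 2) *
            ((∏ t, ∑ m, w m * x t m) - (∏ t, ∑ m, wstar m * x t m)) ^ 2) ∧
    (∀ (p : Fin d → ℝ), (∀ j, 0 ≤ p j) → (∑ j, p j = 1) →
      ∀ (Ω : Type) (_ : MeasurableSpace Ω) (μ : Measure Ω), IsProbabilityMeasure μ →
      ∀ (x : Fin k → Ω → (Fin d → ℝ)), (∀ t, Measurable (x t)) →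
        iIndepFun x μ →
        (∀ t j, μ {ω | x t ω = Pi.single j 1} = ENNReal.ofReal (p j)) →
        (∫ ω, ∑ j, (((∏ t, ∑ m, w m * x t ω m) - (∏ t, ∑ m, wstar m * x t ω m)) *
            ∑ t, (∏ s ∈ Finset.univ.erase t, ∑ m, w m * x s ω m) * x t ω j) ^ 2 ∂μ)
          ≤ 2 * (k : ℝ) ^ 2 * R ^ (2 * k - 2) *
            ((1 / 2) *
              ∫ ω, ((∏ t, ∑ m, w m * x t ω m) - (∏ t, ∑ m, wstar m * x t ω m)) ^ 2 ∂μ)) :=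
  stochastic_gradient_second_moment_general d k R w wstar hw
end

section
/- Assume k ≥ 1 and let p_max = max_j p_j. For every w ∈ ℝ^d, Σ_{j=1}^d ( k·p_j·(B(w)^{k−1} w_j − A(w)^{k−1} w*_j) )² ≤ 2·k²·p_max·B(w)^{k−1}·L(w); that is, the population gradient satisfies ‖∇L(w)‖₂² ≤ 2 k² p_max B(w)^{k−1} L(w). -/
private lemma gradient_upper_bound_aux (d k : ℕ) (hd : 0 < d) (hk : 1 ≤ k)
    (p : Fin d → ℝ) (hp : ∀ j, 0 ≤ p j) (hp1 : ∑ j, p j = 1)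
    (pmax : ℝ) (hpmax : IsGreatest (Set.range p) pmax)
    (wstar : Fin d → ℝ) (hws : ∀ j, wstar j = 1 ∨ wstar j = -1)
    (w : Fin d → ℝ) (A B : ℝ) (hA : A = ∑ j, p j * w j * wstar j)
    (hB : B = ∑ j, p j * (w j)^2) :
    ∑ j, ((k : ℝ) * p j * (B ^ (k - 1) * w j - A ^ (k - 1) * wstar j)) ^ 2
      ≤ 2 * (k : ℝ) ^ 2 * pmax * B ^ (k - 1)
        * ((1 / 2) * (B ^ k - 2 * A ^ k + 1)) := by
  obtain ⟨m, rfl⟩ : ∃ m, k = m + 1 := ⟨k - 1, (Nat.succ_pred_eq_of_pos hk).symm⟩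
  simp only [Nat.add_sub_cancel]
  push_cast
  have hws2 : ∀ j, wstar j ^ 2 = 1 := by
    intro j; rcases hws j with h | h <;> simp [h]
  have hB0 : 0 ≤ B := by
    rw [hB]; exact Finset.sum_nonneg fun j _ => mul_nonneg (hp j) (sq_nonneg _)
  have hpm0 : 0 ≤ pmax := by
    obtain ⟨j, hj⟩ := hpmax.1
    exact hj ▸ hp j
  have hA2B : A ^ 2 ≤ B := by
    have h := Finset.sum_mul_sq_le_sq_mul_sq Finset.univ
      (fun j => Real.sqrt (p j) * w j) (fun j => Real.sqrt (p j) * wstar j)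
    have e1 : ∀ j : Fin d, Real.sqrt (p j) * w j * (Real.sqrt (p j) * wstar j)
        = p j * w j * wstar j := by
      intro j
      rw [show Real.sqrt (p j) * w j * (Real.sqrt (p j) * wstar j)
          = Real.sqrt (p j) * Real.sqrt (p j) * (w j * wstar j) from by ring,
        Real.mul_self_sqrt (hp j)]
      ring
    have e2 : ∀ j : Fin d, (Real.sqrt (p j) * w j) ^ 2 = p j * w j ^ 2 := by
      intro j
      rw [mul_pow, Real.sq_sqrt (hp j)]
    have e3 : ∀ j : Fin d, (Real.sqrt (p j) * wstar j) ^ 2 = p j := by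
      intro j
      rw [mul_pow, Real.sq_sqrt (hp j), hws2 j, mul_one]
    simp only [e1, e2, e3] at h
    rw [hA, hB]
    simpa [hp1] using h
  -- expansion
  have expand : ∑ j, p j * (B ^ m * w j - A ^ m * wstar j) ^ 2
      = B ^ m * B ^ m * B - 2 * B ^ m * A ^ m * A + A ^ m * A ^ m := by
    have e : ∀ j : Fin d, p j * (B ^ m * w j - A ^ m * wstar j) ^ 2 =
        B ^ m * B ^ m * (p j * w j ^ 2) - 2 * B ^ m * A ^ m * (p j * w j * wstar j)
          + A ^ m * A ^ m * (p j * wstar j ^ 2) := by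
      intro j; ring
    rw [Finset.sum_congr rfl fun j _ => e j]
    rw [Finset.sum_add_distrib, Finset.sum_sub_distrib, ← Finset.mul_sum,
      ← Finset.mul_sum, ← Finset.mul_sum]
    simp only [hws2, mul_one]
    rw [← hA, ← hB, hp1, mul_one]
  -- step 1: pull out k^2 pmax
  have step1 : ∑ j, (((m : ℝ) + 1) * p j * (B ^ m * w j - A ^ m * wstar j)) ^ 2
      ≤ ((m : ℝ) + 1) ^ 2 * pmax * ∑ j, p j * (B ^ m * w j - A ^ m * wstar j) ^ 2 := by
    rw [Finset.mul_sum]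
    apply Finset.sum_le_sum
    intro j _
    have hpj : p j ≤ pmax := hpmax.2 ⟨j, rfl⟩
    have h1 : (((m : ℝ) + 1) * p j * (B ^ m * w j - A ^ m * wstar j)) ^ 2
        = ((m : ℝ) + 1) ^ 2 * (p j * p j) * (B ^ m * w j - A ^ m * wstar j) ^ 2 := by ring
    rw [h1]
    have h2 : p j * p j ≤ pmax * p j := mul_le_mul_of_nonneg_right hpj (hp j)
    have hk2 : (0 : ℝ) ≤ ((m : ℝ) + 1) ^ 2 := sq_nonneg _
    calc ((m : ℝ) + 1) ^ 2 * (p j * p j) * (B ^ m * w j - A ^ m * wstar j) ^ 2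
        ≤ ((m : ℝ) + 1) ^ 2 * (pmax * p j) * (B ^ m * w j - A ^ m * wstar j) ^ 2 := by
          apply mul_le_mul_of_nonneg_right _ (sq_nonneg _)
          exact mul_le_mul_of_nonneg_left h2 hk2
      _ = ((m : ℝ) + 1) ^ 2 * pmax * (p j * (B ^ m * w j - A ^ m * wstar j) ^ 2) := by ring
  -- step 2: A^{2m} ≤ B^m
  have hA2m : A ^ m * A ^ m ≤ B ^ m := by
    calc A ^ m * A ^ m = (A ^ 2) ^ m := by rw [← pow_mul, ← pow_add]; ring_nf
      _ ≤ B ^ m := pow_le_pow_left₀ (sq_nonneg A) hA2B m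
  have hBm0 : 0 ≤ B ^ m := pow_nonneg hB0 m
  have hcoef : 0 ≤ ((m : ℝ) + 1) ^ 2 * pmax := mul_nonneg (sq_nonneg _) hpm0
  calc ∑ j, (((m : ℝ) + 1) * p j * (B ^ m * w j - A ^ m * wstar j)) ^ 2
      ≤ ((m : ℝ) + 1) ^ 2 * pmax * ∑ j, p j * (B ^ m * w j - A ^ m * wstar j) ^ 2 := step1
    _ = ((m : ℝ) + 1) ^ 2 * pmax
        * (B ^ m * B ^ m * B - 2 * B ^ m * A ^ m * A + A ^ m * A ^ m) := by rw [expand]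
    _ ≤ ((m : ℝ) + 1) ^ 2 * pmax
        * (B ^ m * B ^ m * B - 2 * B ^ m * A ^ m * A + B ^ m) := by
        apply mul_le_mul_of_nonneg_left _ hcoef
        linarith
    _ = 2 * ((m : ℝ) + 1) ^ 2 * pmax * B ^ m
        * ((1 / 2) * (B ^ (m + 1) - 2 * A ^ (m + 1) + 1)) := by ring

/-- Upper bound on the population gradient: for `k ≥ 1`,
`‖∇L(w)‖₂² ≤ 2 k² p_max B(w)^{k−1} L(w)`. -/
theorem gradient_upper_bound (d k : ℕ) (hd : 0 < d) (hk : 1 ≤ k)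
    (p : Fin d → ℝ) (hp : ∀ j, 0 ≤ p j) (hp1 : ∑ j, p j = 1)
    (pmax : ℝ) (hpmax : IsGreatest (Set.range p) pmax)
    (wstar : Fin d → ℝ) (hws : ∀ j, wstar j = 1 ∨ wstar j = -1)
    (w : Fin d → ℝ) :
    ∑ j, ((k : ℝ) * p j * ((normB d p w) ^ (k - 1) * w j
        - (alignA d p wstar w) ^ (k - 1) * wstar j)) ^ 2
      ≤ 2 * (k : ℝ) ^ 2 * pmax * (normB d p w) ^ (k - 1) * popLoss d k p wstar w := by
  have hL : popLoss d k p wstar w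
      = (1 / 2) * ((normB d p w) ^ k - 2 * (alignA d p wstar w) ^ k + 1) := rfl
  rw [hL]
  exact gradient_upper_bound_aux d k hd hk p hp hp1 pmax hpmax wstar hws w
    (alignA d p wstar w) (normB d p w) rfl rfl
end

section
/- Assume k is even with k ≥ 2, and let c ∈ ℝ. If w ∈ ℝ^d satisfies 2·L(w) ≤ 1 − c, then A(w)^k ≥ c/2 and B(w)^k ≤ 2·A(w)^k − c. -/
/-- For `k` even with `k ≥ 2`: if `2 L(w) ≤ 1 − c`, then `A(w)^k ≥ c/2` and
`B(w)^k ≤ 2 A(w)^k − c`. -/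
theorem alignment_from_small_loss (d k : ℕ) (hd : 0 < d) (hk : 2 ≤ k) (hkeven : Even k)
    (p : Fin d → ℝ) (hp : ∀ j, 0 ≤ p j) (hp1 : ∑ j, p j = 1)
    (wstar : Fin d → ℝ) (hws : ∀ j, wstar j = 1 ∨ wstar j = -1)
    (c : ℝ) (w : Fin d → ℝ)
    (hL : 2 * popLoss d k p wstar w ≤ 1 - c) :
    c / 2 ≤ (alignA d p wstar w) ^ k ∧
    (normB d p w) ^ k ≤ 2 * (alignA d p wstar w) ^ k - c := by
  have hB : 0 ≤ normB d p w := by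
    apply Finset.sum_nonneg
    intro j _
    exact mul_nonneg (hp j) (sq_nonneg _)
  have hBk : 0 ≤ (normB d p w) ^ k := pow_nonneg hB k
  unfold popLoss at hL
  constructor <;> nlinarith
end
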